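/- arXiv:2505.02844 — 3 statements merged into one kernel-verified Lean document; each statement's English description precedes it below -/
import Mathlib

section
/- Let (W_l) be nonnegative reals, b_l = Σ_{j=1}^l W_j, and c_l = OPT - b_l with c_0 = OPT ≥ 0. If for every l, W_{l+1} ≥ c_l / L (with L a positive integer), then b_L ≥ (1 - (1 - 1/L)^L) · OPT. -/
theorem greedy_coverage_bound (L : ℕ) (hL : 0 < L) (OPT : ℝ) (hOPT : 0 ≤ OPT)
    (W : ℕ → ℝ) (hW : ∀ j, 0 ≤ W j)
    (hstep : ∀ l, W (l + 1) ≥ (OPT - ∑ j ∈ Finset.range l, W (j + 1)) / L) :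
    ∑ j ∈ Finset.range L, W (j + 1) ≥ (1 - (1 - 1 / (L : ℝ)) ^ L) * OPT := by
  have hLR : (1 : ℝ) ≤ L := by exact_mod_cast hL
  have hLpos : (0 : ℝ) < L := by positivity
  have hq : (0 : ℝ) ≤ 1 - 1 / L := by
    have : 1 / (L : ℝ) ≤ 1 := by
      rw [div_le_one hLpos]; exact hLR
    linarith
  have key : ∀ l, OPT - ∑ j ∈ Finset.range l, W (j + 1) ≤ (1 - 1 / L) ^ l * OPT := by
    intro l
    induction l with
    | zero => simp
    | succ n ih =>
      rw [Finset.sum_range_succ, pow_succ]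
      have h1 := hstep n
      have h2 : OPT - (∑ j ∈ Finset.range n, W (j + 1)) - W (n + 1)
          ≤ (OPT - ∑ j ∈ Finset.range n, W (j + 1)) * (1 - 1 / L) := by
        have : (OPT - ∑ j ∈ Finset.range n, W (j + 1)) * (1 - 1 / L)
            = (OPT - ∑ j ∈ Finset.range n, W (j + 1))
              - (OPT - ∑ j ∈ Finset.range n, W (j + 1)) / L := by ring
        rw [this]; linarith
      calc OPT - (∑ j ∈ Finset.range n, W (j + 1) + W (n + 1))
          ≤ (OPT - ∑ j ∈ Finset.range n, W (j + 1)) * (1 - 1 / L) := by linarith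
        _ ≤ (1 - 1 / L) ^ n * OPT * (1 - 1 / L) := by
            exact mul_le_mul_of_nonneg_right ih hq
        _ = (1 - 1 / L) ^ n * (1 - 1 / L) * OPT := by ring
  have := key L
  nlinarith [this]
end

section
/- Under the hypotheses of the previous statement (W_{l+1} ≥ (OPT - Σ_{j≤l} W_j)/L for all l, all W_j ≥ 0, OPT ≥ 0, L a positive integer), the total greedy weight b_L = Σ_{j=1}^L W_j satisfies b_L ≥ (1 - 1/e) · OPT. -/
theorem greedy_one_sub_inv_e (L : ℕ) (hL : 0 < L) (OPT : ℝ) (hOPT : 0 ≤ OPT)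
    (W : ℕ → ℝ) (hW : ∀ j, 0 ≤ W j)
    (hstep : ∀ l, W (l + 1) ≥ (OPT - ∑ j ∈ Finset.range l, W (j + 1)) / L) :
    ∑ j ∈ Finset.range L, W (j + 1) ≥ (1 - 1 / Real.exp 1) * OPT := by
  have hLpos : (0:ℝ) < L := by exact_mod_cast hL
  have hL1 : (1:ℝ) ≤ L := by exact_mod_cast hL
  have hq0 : (0:ℝ) ≤ 1 - 1 / L := by
    rw [sub_nonneg]
    exact div_le_one_of_le₀ hL1 hLpos.le
  -- c_l := OPT - partial sum; c_l ≤ (1-1/L)^l * OPT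
  have key : ∀ l, OPT - ∑ j ∈ Finset.range l, W (j + 1) ≤ (1 - 1/L)^l * OPT := by
    intro l
    induction l with
    | zero => simp
    | succ n ih =>
      rw [Finset.sum_range_succ]
      have h := hstep n
      have : OPT - (∑ j ∈ Finset.range n, W (j + 1)) - W (n+1)
          ≤ (OPT - ∑ j ∈ Finset.range n, W (j + 1)) * (1 - 1/L) := by
        rw [mul_sub, mul_one, mul_one_div]
        linarith
      calc OPT - ((∑ j ∈ Finset.range n, W (j + 1)) + W (n+1))
          = OPT - (∑ j ∈ Finset.range n, W (j + 1)) - W (n+1) := by ring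
        _ ≤ (OPT - ∑ j ∈ Finset.range n, W (j + 1)) * (1 - 1/L) := this
        _ ≤ ((1 - 1/L)^n * OPT) * (1 - 1/L) := by
            exact mul_le_mul_of_nonneg_right ih hq0
        _ = (1 - 1/L)^(n+1) * OPT := by ring
  have hexp : (1 - 1/(L:ℝ))^L ≤ 1 / Real.exp 1 := by
    have h1 : (1:ℝ) - 1/L ≤ Real.exp (-(1/L)) := by
      have := Real.add_one_le_exp (-(1/(L:ℝ)))
      linarith
    calc (1 - 1/(L:ℝ))^L ≤ (Real.exp (-(1/L)))^L :=
          pow_le_pow_left₀ hq0 h1 L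
      _ = Real.exp ((L:ℝ) * (-(1/L))) := by rw [← Real.exp_nat_mul]
      _ = Real.exp (-1) := by
          congr 1
          field_simp
      _ = 1 / Real.exp 1 := by rw [Real.exp_neg]; exact (one_div _).symm
  have := key L
  have h2 : (1 - 1/(L:ℝ))^L * OPT ≤ (1 / Real.exp 1) * OPT :=
    mul_le_mul_of_nonneg_right hexp hOPT
  linarith
end

section
/- In the weighted maximum coverage problem (finite universe U with nonnegative weights, sets S_1,…,S_n, budget L), the greedy algorithm that at each of L steps picks the set maximizing the newly covered weight achieves covered weight at least (1 - (1 - 1/L)^L) times the maximum weight coverable by any L sets. -/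
private lemma sum_biUnion_le_aux {α β : Type*} [DecidableEq α] [DecidableEq β] (w : β → ℝ)
    (hw : ∀ x, 0 ≤ w x) (T : Finset α) (f : α → Finset β) :
    (∑ x ∈ T.biUnion f, w x) ≤ ∑ i ∈ T, ∑ x ∈ f i, w x := by
  induction T using Finset.induction with
  | empty => simp
  | @insert a s hnot ih =>
    rw [Finset.biUnion_insert, Finset.sum_insert hnot]
    calc (∑ x ∈ f a ∪ s.biUnion f, w x)
        ≤ (∑ x ∈ f a, w x) + ∑ x ∈ s.biUnion f, w x := by
          rw [← Finset.union_sdiff_self_eq_union, Finset.sum_union Finset.disjoint_sdiff]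
          have : (∑ x ∈ s.biUnion f \ f a, w x) ≤ ∑ x ∈ s.biUnion f, w x :=
            Finset.sum_le_sum_of_subset_of_nonneg Finset.sdiff_subset (fun x _ _ => hw x)
          linarith
      _ ≤ (∑ x ∈ f a, w x) + ∑ i ∈ s, ∑ x ∈ f i, w x := by linarith [ih]

/-- The greedy algorithm for weighted maximum coverage: at each of `L` steps it
picks a set maximizing the newly covered weight. The covered weight after `L`
steps is at least `(1 - (1 - 1/L)^L)` times the weight covered by any `L` sets. -/
theorem greedy_max_coverage {U : Type*} [Fintype U] [DecidableEq U]
    {n : ℕ} (w : U → ℝ) (hw : ∀ x, 0 ≤ w x) (S : Fin n → Finset U)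
    (L : ℕ) (hL : 0 < L)
    (pick : ℕ → Fin n) (C : ℕ → Finset U)
    (hC0 : C 0 = ∅)
    (hCsucc : ∀ l, C (l + 1) = C l ∪ S (pick l))
    (hgreedy : ∀ l, ∀ i : Fin n,
      (∑ x ∈ S i \ C l, w x) ≤ ∑ x ∈ S (pick l) \ C l, w x) :
    ∀ T : Finset (Fin n), T.card = L →
      (∑ x ∈ C L, w x) ≥ (1 - (1 - 1 / (L : ℝ)) ^ L) * ∑ x ∈ T.biUnion S, w x := by
  intro T hT
  set OPT := ∑ x ∈ T.biUnion S, w x with hOPT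
  have hLpos : (0 : ℝ) < (L : ℝ) := by exact_mod_cast hL
  have hfac0 : (0 : ℝ) ≤ 1 - 1 / (L : ℝ) := by
    have : 1 / (L : ℝ) ≤ 1 := by
      rw [div_le_one hLpos]; exact_mod_cast hL
    linarith
  have hOPTnonneg : 0 ≤ OPT := Finset.sum_nonneg fun x _ => hw x
  -- step: at each step, remaining gap shrinks
  have hstep : ∀ l, OPT - ∑ x ∈ C l, w x ≤ (L : ℝ) * ∑ x ∈ S (pick l) \ C l, w x := by
    intro l
    have h1 : OPT ≤ (∑ x ∈ C l, w x) + ∑ x ∈ T.biUnion S \ C l, w x := by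
      have hsub : T.biUnion S ⊆ C l ∪ T.biUnion S := Finset.subset_union_right
      have := Finset.sum_le_sum_of_subset_of_nonneg hsub (fun x _ _ => hw x)
      have hdisj : Disjoint (C l) (T.biUnion S \ C l) := Finset.disjoint_sdiff
      have hun : C l ∪ T.biUnion S = C l ∪ (T.biUnion S \ C l) :=
        (Finset.union_sdiff_self_eq_union).symm
      rw [hun, Finset.sum_union hdisj] at this
      exact this
    have h2 : (∑ x ∈ T.biUnion S \ C l, w x) ≤ ∑ i ∈ T, ∑ x ∈ S i \ C l, w x := by
      have heq : T.biUnion S \ C l = T.biUnion (fun i => S i \ C l) := by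
        ext x; simp [Finset.mem_sdiff, Finset.mem_biUnion]; tauto
      rw [heq]
      exact sum_biUnion_le_aux w hw T _
    have h3 : (∑ i ∈ T, ∑ x ∈ S i \ C l, w x) ≤ (L : ℝ) * ∑ x ∈ S (pick l) \ C l, w x := by
      calc (∑ i ∈ T, ∑ x ∈ S i \ C l, w x)
          ≤ ∑ _i ∈ T, ∑ x ∈ S (pick l) \ C l, w x :=
            Finset.sum_le_sum fun i _ => hgreedy l i
        _ = (L : ℝ) * ∑ x ∈ S (pick l) \ C l, w x := by
            rw [Finset.sum_const, hT, nsmul_eq_mul]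
    linarith
  have hCeq : ∀ l, (∑ x ∈ C (l + 1), w x)
      = (∑ x ∈ C l, w x) + ∑ x ∈ S (pick l) \ C l, w x := by
    intro l
    rw [hCsucc l, ← Finset.union_sdiff_self_eq_union,
      Finset.sum_union Finset.disjoint_sdiff]
  -- main induction
  have key : ∀ l, OPT - ∑ x ∈ C l, w x ≤ (1 - 1 / (L : ℝ)) ^ l * OPT := by
    intro l
    induction l with
    | zero => simp [hC0]
    | succ l ih =>
      have hd := hstep l
      have hgain : OPT - ∑ x ∈ C (l + 1), w x
          ≤ (1 - 1 / (L : ℝ)) * (OPT - ∑ x ∈ C l, w x) := by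
        rw [hCeq l]
        have : (OPT - ∑ x ∈ C l, w x) / (L : ℝ) ≤ ∑ x ∈ S (pick l) \ C l, w x := by
          rw [div_le_iff₀ hLpos]; linarith [hd]
        have hexp : (1 - 1 / (L : ℝ)) * (OPT - ∑ x ∈ C l, w x)
            = (OPT - ∑ x ∈ C l, w x) - (OPT - ∑ x ∈ C l, w x) / (L : ℝ) := by
          field_simp
        rw [hexp]; linarith
      calc OPT - ∑ x ∈ C (l + 1), w x
          ≤ (1 - 1 / (L : ℝ)) * (OPT - ∑ x ∈ C l, w x) := hgain
        _ ≤ (1 - 1 / (L : ℝ)) * ((1 - 1 / (L : ℝ)) ^ l * OPT) :=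
            mul_le_mul_of_nonneg_left ih hfac0
        _ = (1 - 1 / (L : ℝ)) ^ (l + 1) * OPT := by ring
  have := key L
  nlinarith [this]
end
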